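/- Consider the Markovian forward kernel q(x_t | x_{t−1}, c) = N(√(α_t γ_t)·x_{t−1} + √ᾱ_t·(√(1−γ̄_t)·D(c; γ̄_t) − √(γ_t − γ̄_t)·D(c; γ̄_{t−1})), (1 − α_t γ_t − ᾱ_t(1−γ_t))·I). If q(x_{t−1} | c, x_0) = N(√ᾱ_{t−1}·(√γ̄_{t−1}·x_0 + √(1−γ̄_{t−1})·D(c; γ̄_{t−1})), (1−ᾱ_{t−1})I), then the induced marginal q(x_t | c, x_0) = N(√ᾱ_t·(√γ̄_t·x_0 + √(1−γ̄_t)·D(c; γ̄_t)), (1−ᾱ_t)I). -/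

import Mathlib

open MeasureTheory ProbabilityTheory

/-- The standard Gaussian measure `N(0, I)` on `ℝ^d`. -/
noncomputable def stdGaussian (d : ℕ) : Measure (Fin d → ℝ) :=
  Measure.pi fun _ => gaussianReal 0 1

/-- The isotropic Gaussian measure `N(μ, v·I)` on `ℝ^d`. -/
noncomputable def gaussIso (d : ℕ) (μ : Fin d → ℝ) (v : ℝ) : Measure (Fin d → ℝ) :=
  (stdGaussian d).map fun x => μ + Real.sqrt v • x


open scoped NNReal ENNReal

section Auxiliary

lemma pdf_mul_pdf (v w : ℝ≥0) (hv : v ≠ 0) (hw : w ≠ 0) (x z : ℝ) :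
    gaussianPDFReal 0 v x * gaussianPDFReal 0 w (z - x)
      = gaussianPDFReal (v * z / (v + w)) (v * w / (v + w)) x
        * gaussianPDFReal 0 (v + w) z := by
  have hv' : (0:ℝ) < v := lt_of_le_of_ne v.coe_nonneg (by exact_mod_cast (Ne.symm hv))
  have hw' : (0:ℝ) < w := lt_of_le_of_ne w.coe_nonneg (by exact_mod_cast (Ne.symm hw))
  have hvw : (0:ℝ) < (v:ℝ) + w := by positivity
  simp only [gaussianPDFReal, NNReal.coe_add, NNReal.coe_div, NNReal.coe_mul]
  rw [mul_mul_mul_comm, ← Real.exp_add, mul_mul_mul_comm, ← Real.exp_add]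
  congr 1
  · rw [← mul_inv, ← mul_inv, ← Real.sqrt_mul (by positivity), ← Real.sqrt_mul (by positivity)]
    congr 2
    field_simp
  · congr 1
    field_simp
    ring

lemma lintegral_pdf_conv (v w : ℝ≥0) (hv : v ≠ 0) (hw : w ≠ 0) (z : ℝ) :
    ∫⁻ x, gaussianPDF 0 v x * gaussianPDF 0 w (z - x) = gaussianPDF 0 (v + w) z := by
  have key : ∀ x, gaussianPDF 0 v x * gaussianPDF 0 w (z - x)
      = gaussianPDF (v * z / (v + w)) (v * w / (v + w)) x * gaussianPDF 0 (v + w) z := by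
    intro x
    simp only [gaussianPDF]
    rw [← ENNReal.ofReal_mul (gaussianPDFReal_nonneg _ _ _),
      ← ENNReal.ofReal_mul (gaussianPDFReal_nonneg _ _ _), pdf_mul_pdf v w hv hw]
  simp_rw [key]
  rw [lintegral_mul_const _ (measurable_gaussianPDF _ _),
    lintegral_gaussianPDF_eq_one _ (by
      simp only [ne_eq, div_eq_zero_iff, mul_eq_zero, not_or]
      exact ⟨⟨hv, hw⟩, by positivity⟩), one_mul]

lemma gaussianReal_conv (v w : ℝ≥0) :
    ((gaussianReal 0 v).prod (gaussianReal 0 w)).map (fun p : ℝ × ℝ => p.1 + p.2)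
      = gaussianReal 0 (v + w) := by
  by_cases hv : v = 0
  · subst hv
    rw [gaussianReal_zero_var, Measure.dirac_prod, Measure.map_map (by fun_prop) (by fun_prop)]
    simp [Function.comp_def, zero_add]
  by_cases hw : w = 0
  · subst hw
    rw [gaussianReal_zero_var, Measure.prod_dirac, Measure.map_map (by fun_prop) (by fun_prop)]
    simp [Function.comp_def, add_zero]
  ext s hs
  rw [Measure.map_apply (by fun_prop) hs,
    Measure.prod_apply (hs.preimage (by fun_prop))]
  have hν : ∀ x : ℝ, gaussianReal 0 w (Prod.mk x ⁻¹' ((fun p : ℝ × ℝ => p.1 + p.2) ⁻¹' s))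
      = ∫⁻ z, s.indicator 1 z * gaussianPDF 0 w (z - x) := by
    intro x
    have hpre : (Prod.mk x ⁻¹' ((fun p : ℝ × ℝ => p.1 + p.2) ⁻¹' s))
        = (fun y => x + y) ⁻¹' s := rfl
    rw [hpre, gaussianReal_of_var_ne_zero _ hw,
      withDensity_apply _ (hs.preimage (by fun_prop)),
      ← lintegral_indicator (hs.preimage (by fun_prop))]
    have : ∀ y : ℝ, ((fun y => x + y) ⁻¹' s).indicator (gaussianPDF 0 w) y
        = s.indicator 1 (x + y) * gaussianPDF 0 w ((x + y) - x) := by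
      intro y
      by_cases hy : x + y ∈ s
      · rw [Set.indicator_of_mem (by simpa using hy), Set.indicator_of_mem hy]
        simp
      · rw [Set.indicator_of_notMem (by simpa using hy), Set.indicator_of_notMem hy, zero_mul]
    simp_rw [this]
    exact lintegral_add_left_eq_self (fun z => s.indicator 1 z * gaussianPDF 0 w (z - x)) x
  simp_rw [hν]
  have hmeas : Measurable (Function.uncurry fun x z =>
      s.indicator (1 : ℝ → ℝ≥0∞) z * gaussianPDF 0 w (z - x)) := by
    apply Measurable.mul
    · exact ((measurable_indicator_const_iff 1).mpr hs).comp measurable_snd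
    · exact (measurable_gaussianPDF 0 w).comp (measurable_snd.sub measurable_fst)
  rw [gaussianReal_of_var_ne_zero _ hv,
    lintegral_withDensity_eq_lintegral_mul _ (measurable_gaussianPDF _ _)
      (Measurable.lintegral_prod_right hmeas)]
  have step : ∀ x : ℝ, gaussianPDF 0 v x * ∫⁻ z, s.indicator 1 z * gaussianPDF 0 w (z - x)
      = ∫⁻ z, gaussianPDF 0 v x * (s.indicator 1 z * gaussianPDF 0 w (z - x)) := by
    intro x
    rw [← lintegral_const_mul _ (by
      exact (((measurable_indicator_const_iff 1).mpr hs)).mul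
        ((measurable_gaussianPDF 0 w).comp (measurable_id.sub measurable_const)))]
  simp only [Pi.mul_apply]
  simp_rw [step]
  rw [lintegral_lintegral_swap (by
    apply Measurable.aemeasurable
    exact ((measurable_gaussianPDF 0 v).comp measurable_fst).mul hmeas)]
  have inner : ∀ z : ℝ, ∫⁻ x, gaussianPDF 0 v x * (s.indicator 1 z * gaussianPDF 0 w (z - x))
      = s.indicator 1 z * gaussianPDF 0 (v + w) z := by
    intro z
    calc ∫⁻ x, gaussianPDF 0 v x * (s.indicator 1 z * gaussianPDF 0 w (z - x))
        = ∫⁻ x, s.indicator 1 z * (gaussianPDF 0 v x * gaussianPDF 0 w (z - x)) := by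
          congr 1; ext x; ring
      _ = s.indicator 1 z * ∫⁻ x, gaussianPDF 0 v x * gaussianPDF 0 w (z - x) := by
          rw [lintegral_const_mul _ (show Measurable fun x : ℝ =>
            gaussianPDF 0 v x * gaussianPDF 0 w (z - x) from (measurable_gaussianPDF 0 v).mul
            ((measurable_gaussianPDF 0 w).comp (measurable_const.sub measurable_id)))]
      _ = s.indicator 1 z * gaussianPDF 0 (v + w) z := by
          rw [lintegral_pdf_conv v w hv hw]
  simp_rw [inner]
  have : ∀ z : ℝ, s.indicator 1 z * gaussianPDF 0 (v + w) z
      = s.indicator (gaussianPDF 0 (v + w)) z := by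
    intro z
    by_cases hz : z ∈ s
    · rw [Set.indicator_of_mem hz, Set.indicator_of_mem hz]; simp
    · rw [Set.indicator_of_notMem hz, Set.indicator_of_notMem hz, zero_mul]
  simp_rw [this]
  rw [lintegral_indicator hs, gaussianReal_of_var_ne_zero _ (by positivity),
    withDensity_apply _ hs]

lemma gaussianReal_sum_scaled (a b : ℝ) :
    ((gaussianReal 0 1).prod (gaussianReal 0 1)).map (fun p : ℝ × ℝ => a * p.1 + b * p.2)
      = gaussianReal 0 ((a ^ 2 + b ^ 2).toNNReal) := by
  have h1 : (fun p : ℝ × ℝ => a * p.1 + b * p.2)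
      = (fun p : ℝ × ℝ => p.1 + p.2) ∘ (Prod.map (a * ·) (b * ·)) := rfl
  rw [h1, ← Measure.map_map (by fun_prop) (by fun_prop),
    ← Measure.map_prod_map _ _ (by fun_prop) (by fun_prop),
    gaussianReal_map_const_mul, gaussianReal_map_const_mul, mul_zero, mul_zero, mul_one, mul_one,
    gaussianReal_conv]
  congr 1
  rw [← NNReal.coe_inj]
  push_cast
  rw [Real.coe_toNNReal _ (by positivity)]

lemma pi_map_comp {α β : Type*} [MeasurableSpace α] [MeasurableSpace β] (d : ℕ)
    (μ : Measure α) [IsProbabilityMeasure μ] (f : α → β) (hf : Measurable f) :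
    (Measure.pi (fun _ : Fin d => μ)).map (fun g i => f (g i))
      = Measure.pi (fun _ : Fin d => μ.map f) := by
  haveI : IsProbabilityMeasure (μ.map f) := Measure.isProbabilityMeasure_map hf.aemeasurable
  refine (Measure.pi_eq fun s hs => ?_).symm
  rw [Measure.map_apply (show Measurable fun (g : Fin d → α) (i : Fin d) => f (g i) from
    measurable_pi_lambda _ fun i => hf.comp (measurable_pi_apply i))
    (MeasurableSet.univ_pi hs)]
  have : (fun (g : Fin d → α) i => f (g i)) ⁻¹' Set.pi Set.univ s
      = Set.pi Set.univ (fun i => f ⁻¹' s i) := by ext; simp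
  rw [this, Measure.pi_pi]
  simp_rw [Measure.map_apply hf (hs _)]

instance (d : ℕ) : IsProbabilityMeasure (stdGaussian d) := by
  unfold _root_.stdGaussian; infer_instance

instance (d : ℕ) (μ : Fin d → ℝ) (v : ℝ) : IsProbabilityMeasure (gaussIso d μ v) := by
  unfold gaussIso
  exact Measure.isProbabilityMeasure_map (by fun_prop)

lemma stdGaussian_sum (d : ℕ) (a b : ℝ) :
    ((stdGaussian d).prod (stdGaussian d)).map
        (fun p : (Fin d → ℝ) × (Fin d → ℝ) => a • p.1 + b • p.2)
      = (stdGaussian d).map (fun x => Real.sqrt (a ^ 2 + b ^ 2) • x) := by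
  have hmp := measurePreserving_arrowProdEquivProdArrow ℝ ℝ (Fin d)
    (fun _ => gaussianReal 0 1) (fun _ => gaussianReal 0 1)
  rw [show (stdGaussian d).prod (stdGaussian d)
      = (Measure.pi fun _ : Fin d => (gaussianReal 0 1).prod (gaussianReal 0 1)).map
        (MeasurableEquiv.arrowProdEquivProdArrow ℝ ℝ (Fin d)) from hmp.map_eq.symm,
    Measure.map_map (by fun_prop) (MeasurableEquiv.measurable _)]
  have hcomp : ((fun p : (Fin d → ℝ) × (Fin d → ℝ) => a • p.1 + b • p.2)
      ∘ (MeasurableEquiv.arrowProdEquivProdArrow ℝ ℝ (Fin d)))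
      = fun (h : Fin d → ℝ × ℝ) (i : Fin d) => (fun q : ℝ × ℝ => a * q.1 + b * q.2) (h i) := by
    ext h i
    simp [MeasurableEquiv.arrowProdEquivProdArrow, Equiv.arrowProdEquivProdArrow]
  have h2 := pi_map_comp d ((gaussianReal 0 1).prod (gaussianReal 0 1))
    (fun q : ℝ × ℝ => a * q.1 + b * q.2) (by fun_prop)
  have h3 := pi_map_comp d (gaussianReal 0 1)
    (fun y : ℝ => Real.sqrt (a ^ 2 + b ^ 2) * y) (by fun_prop)
  rw [hcomp, h2, gaussianReal_sum_scaled,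
    show (fun x : Fin d → ℝ => Real.sqrt (a ^ 2 + b ^ 2) • x)
      = fun (g : Fin d → ℝ) (i : Fin d) => (fun y => Real.sqrt (a ^ 2 + b ^ 2) * y) (g i) from
        rfl, _root_.stdGaussian, h3, gaussianReal_map_const_mul]
  have hvar : NNReal.mk (Real.sqrt (a ^ 2 + b ^ 2) ^ 2) (sq_nonneg _)
      = (a ^ 2 + b ^ 2).toNNReal := by
    rw [← NNReal.coe_inj]
    simp [Real.sq_sqrt (by positivity : (0:ℝ) ≤ a ^ 2 + b ^ 2),
      Real.coe_toNNReal _ (by positivity : (0:ℝ) ≤ a ^ 2 + b ^ 2)]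
  rw [mul_zero, mul_one, hvar]

lemma bind_map_prod {α β γ : Type*} [MeasurableSpace α] [MeasurableSpace β] [MeasurableSpace γ]
    (ν : Measure α) (ρ : Measure β) [SFinite ν] [SFinite ρ]
    (F : α × β → γ) (hF : Measurable F) :
    (ν.prod ρ).map F = ν.bind (fun x => ρ.map (fun y => F (x, y))) := by
  have hker : Measurable fun x => ρ.map (fun y => F (x, y)) := by
    apply Measure.measurable_of_measurable_coe
    intro s hs
    have : ∀ x : α, Measure.map (fun y => F (x, y)) ρ s = ρ (Prod.mk x ⁻¹' (F ⁻¹' s)) := by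
      intro x
      rw [Measure.map_apply
        (show Measurable fun y => F (x, y) from hF.comp measurable_prodMk_left) hs]
      rfl
    simp_rw [this]
    exact measurable_measure_prodMk_left (hF hs)
  ext s hs
  rw [Measure.map_apply hF hs, Measure.prod_apply (hF hs),
    Measure.bind_apply hs hker.aemeasurable]
  congr 1
  ext x
  rw [Measure.map_apply
    (show Measurable fun y => F (x, y) from hF.comp measurable_prodMk_left) hs]
  rfl

lemma gaussIso_bind (d : ℕ) (μ m : Fin d → ℝ) (v w c : ℝ)
    (hv : 0 ≤ v) (hw : 0 ≤ w) (hc : 0 ≤ c) :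
    (gaussIso d μ v).bind (fun x => gaussIso d (c • x + m) w)
      = gaussIso d (c • μ + m) (c ^ 2 * v + w) := by
  have hF : Measurable (fun p : (Fin d → ℝ) × (Fin d → ℝ) =>
      (c • p.1 + m) + Real.sqrt w • p.2) := by fun_prop
  have hker : ∀ x : Fin d → ℝ, gaussIso d (c • x + m) w
      = (stdGaussian d).map (fun z => (c • x + m) + Real.sqrt w • z) := fun _ => rfl
  have h1 : (gaussIso d μ v).bind (fun x => gaussIso d (c • x + m) w)
      = ((gaussIso d μ v).prod (stdGaussian d)).map
          (fun p => (c • p.1 + m) + Real.sqrt w • p.2) := by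
    rw [bind_map_prod _ _ _ hF]
    rfl
  rw [h1, gaussIso]
  nth_rewrite 2 [show stdGaussian d = (stdGaussian d).map id from Measure.map_id.symm]
  rw [Measure.map_prod_map _ _ (by fun_prop) measurable_id,
    Measure.map_map hF (by fun_prop)]
  have h2 : ((fun p : (Fin d → ℝ) × (Fin d → ℝ) => (c • p.1 + m) + Real.sqrt w • p.2)
        ∘ (Prod.map (fun x => μ + Real.sqrt v • x) id))
      = (fun y => (c • μ + m) + y)
        ∘ (fun p : (Fin d → ℝ) × (Fin d → ℝ) => (c * Real.sqrt v) • p.1 + Real.sqrt w • p.2) := by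
    ext p i
    simp [smul_add, smul_smul, mul_comm]
    ring
  rw [h2, ← Measure.map_map (by fun_prop) (by fun_prop), stdGaussian_sum,
    Measure.map_map (by fun_prop) (by fun_prop)]
  have h3 : Real.sqrt ((c * Real.sqrt v) ^ 2 + Real.sqrt w ^ 2) = Real.sqrt (c ^ 2 * v + w) := by
    rw [mul_pow, Real.sq_sqrt hv, Real.sq_sqrt hw]
  rw [gaussIso]
  congr 1
  funext x
  simp only [Function.comp_apply, h3]

end Auxiliary

/-- DDPM-like forward consistency (Theorem 2): with the Markovian kernel
`q(x_t | x_{t−1}, c) = N(√(α_t γ_t)·x_{t−1} + √ᾱ_t·(√(1−γ̄_t)·D(c;γ̄_t) − √(γ_t−γ̄_t)·D(c;γ̄_{t−1})),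
(1 − α_t γ_t − ᾱ_t(1−γ_t))·I)` and the marginal
`q(x_{t−1} | c, x_0) = N(√ᾱ_{t−1}·(√γ̄_{t−1}·x_0 + √(1−γ̄_{t−1})·D(c;γ̄_{t−1})), (1−ᾱ_{t−1})I)`,
the induced marginal is
`q(x_t | c, x_0) = N(√ᾱ_t·(√γ̄_t·x_0 + √(1−γ̄_t)·D(c;γ̄_t)), (1−ᾱ_t)I)`.
Here `ᾱ_t = ᾱ_{t−1}·α_t` (`abarp * at`) and `γ̄_t = γ̄_{t−1}·γ_t` (`gbarp * gt`);
`D0 = D(c; γ̄_{t−1})` and `D1 = D(c; γ̄_t)` are deterministic functions of the history. -/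
theorem ddpm_marginal_consistency (d : ℕ) (at_ gt abarp gbarp : ℝ)
    (hat : at_ ∈ Set.Ioc (0 : ℝ) 1) (hgt : gt ∈ Set.Ioc (0 : ℝ) 1)
    (habarp : abarp ∈ Set.Ioc (0 : ℝ) 1) (hgbarp : gbarp ∈ Set.Ioc (0 : ℝ) 1)
    (x0 D0 D1 : Fin d → ℝ) :
    (gaussIso d
        (Real.sqrt abarp • (Real.sqrt gbarp • x0 + Real.sqrt (1 - gbarp) • D0))
        (1 - abarp)).bind
      (fun xp => gaussIso d
        (Real.sqrt (at_ * gt) • xp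
          + Real.sqrt (abarp * at_)
            • (Real.sqrt (1 - gbarp * gt) • D1 - Real.sqrt (gt - gbarp * gt) • D0))
        (1 - at_ * gt - (abarp * at_) * (1 - gt)))
      = gaussIso d
          (Real.sqrt (abarp * at_)
            • (Real.sqrt (gbarp * gt) • x0 + Real.sqrt (1 - gbarp * gt) • D1))
          (1 - abarp * at_) := by
  obtain ⟨hat0, hat1⟩ := hat
  obtain ⟨hgt0, hgt1⟩ := hgt
  obtain ⟨hab0, hab1⟩ := habarp
  obtain ⟨hgb0, hgb1⟩ := hgbarp
  have hv : (0:ℝ) ≤ 1 - abarp := by linarith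
  have hw : (0:ℝ) ≤ 1 - at_ * gt - (abarp * at_) * (1 - gt) := by
    nlinarith [mul_nonneg (mul_nonneg (by linarith : (0:ℝ) ≤ 1 - abarp) hat0.le)
      (by linarith : (0:ℝ) ≤ 1 - gt)]
  have hc : (0:ℝ) ≤ Real.sqrt (at_ * gt) := Real.sqrt_nonneg _
  rw [gaussIso_bind d _ _ _ _ _ hv hw hc]
  have hvar : Real.sqrt (at_ * gt) ^ 2 * (1 - abarp)
      + (1 - at_ * gt - (abarp * at_) * (1 - gt)) = 1 - abarp * at_ := by
    rw [Real.sq_sqrt (by positivity)]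
    ring
  have key : ∀ a b c2 : ℝ, 0 ≤ a → 0 ≤ b →
      Real.sqrt a * (Real.sqrt b * Real.sqrt c2) = Real.sqrt (a * b * c2) := by
    intro a b c2 ha hb
    rw [← Real.sqrt_mul hb, ← Real.sqrt_mul ha, mul_assoc]
  have h1 : Real.sqrt (at_ * gt) * (Real.sqrt abarp * Real.sqrt gbarp)
      = Real.sqrt (abarp * at_) * Real.sqrt (gbarp * gt) := by
    rw [key (at_ * gt) abarp gbarp (by positivity) (by positivity),
      ← Real.sqrt_mul (by positivity : (0:ℝ) ≤ abarp * at_)]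
    congr 1
    ring
  have h2 : Real.sqrt (at_ * gt) * (Real.sqrt abarp * Real.sqrt (1 - gbarp))
      = Real.sqrt (abarp * at_) * Real.sqrt (gt - gbarp * gt) := by
    rw [key (at_ * gt) abarp (1 - gbarp) (by positivity) (by positivity),
      ← Real.sqrt_mul (by positivity : (0:ℝ) ≤ abarp * at_)]
    congr 1
    ring
  have hmean : Real.sqrt (at_ * gt)
        • (Real.sqrt abarp • (Real.sqrt gbarp • x0 + Real.sqrt (1 - gbarp) • D0))
      + Real.sqrt (abarp * at_)
        • (Real.sqrt (1 - gbarp * gt) • D1 - Real.sqrt (gt - gbarp * gt) • D0)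
      = Real.sqrt (abarp * at_)
        • (Real.sqrt (gbarp * gt) • x0 + Real.sqrt (1 - gbarp * gt) • D1) := by
    funext i
    simp only [Pi.add_apply, Pi.smul_apply, Pi.sub_apply, smul_eq_mul]
    linear_combination (x0 i) * h1 + (D0 i) * h2
  rw [hmean, hvar]
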